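/- Let T ∈ ℝ^{nℓ×nℓ} be such that T = (I ⊗ L)(I + A)(I ⊗ Lᵀ) with L ∈ ℝ^{n×n} invertible and I + A symmetric positive definite. For any U ∈ ℝ^{n×r} with orthonormal columns and Π = I ⊗ (UUᵀ), the approximation T̂ = (I ⊗ L)(I + Π A Π)(I ⊗ Lᵀ) is symmetric positive definite. -/

import Mathlib

/-!
`Π = I ⊗ UUᵀ` is an orthogonal projection, so `I + ΠAΠ = (I - Π) + Π(I + A)Π`. Both summands
are positive semidefinite, and the quadratic form of their sum is strictly positive: on `x` with
`Πx ≠ 0` because `I + A` is positive definite, and otherwise because `(I - Π)x = x`.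
Conjugating by the invertible matrix `I ⊗ L` preserves positive definiteness.
-/

open Matrix Kronecker

namespace Matrix

variable {m k l R : Type*} [Fintype m] [Fintype k]

theorem isStarProjection_mul_conjTranspose [Semiring R] [StarRing R] [DecidableEq k]
    {U : Matrix m k R} (hU : Uᴴ * U = 1) : IsStarProjection (U * Uᴴ) where
  isIdempotentElem := by
    rw [IsIdempotentElem, Matrix.mul_assoc, ← Matrix.mul_assoc Uᴴ, hU, Matrix.one_mul]
  isSelfAdjoint := by
    rw [IsSelfAdjoint, star_eq_conjTranspose, conjTranspose_mul, conjTranspose_conjTranspose]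

theorem IsStarProjection.one_kronecker [CommSemiring R] [StarRing R] [Fintype l] [DecidableEq l]
    {P : Matrix m m R} (hP : IsStarProjection P) :
    IsStarProjection ((1 : Matrix l l R) ⊗ₖ P) where
  isIdempotentElem := by
    rw [IsIdempotentElem, ← mul_kronecker_mul, Matrix.one_mul, hP.isIdempotentElem.eq]
  isSelfAdjoint := by
    rw [IsSelfAdjoint, star_eq_conjTranspose, conjTranspose_kronecker, conjTranspose_one,
      ← star_eq_conjTranspose, hP.isSelfAdjoint.star_eq]

theorem PosDef.one_sub_add_mul_mul_same [Ring R] [PartialOrder R] [StarRing R]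
    [StarOrderedRing R] [NoZeroDivisors R] [DecidableEq m]
    {M P : Matrix m m R} (hM : M.PosDef) (hP : IsStarProjection P) :
    (1 - P + P * M * P).PosDef := by
  have hPh : Pᴴ = P := hP.isSelfAdjoint.star_eq
  have hQ : (1 - P).PosSemidef := by
    have := posSemidef_conjTranspose_mul_self (1 - P)
    rwa [← star_eq_conjTranspose, hP.one_sub.isSelfAdjoint.star_eq,
      hP.one_sub.isIdempotentElem.eq] at this
  have hPMP : (P * M * P).PosSemidef := by
    simpa only [hPh] using hM.posSemidef.conjTranspose_mul_mul_same P
  refine of_dotProduct_mulVec_pos (hQ.isHermitian.add hPMP.isHermitian) fun x hx => ?_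
  have hsplit : star x ⬝ᵥ ((1 - P + P * M * P) *ᵥ x)
      = star x ⬝ᵥ ((1 - P) *ᵥ x) + star (P *ᵥ x) ⬝ᵥ (M *ᵥ (P *ᵥ x)) := by
    rw [add_mulVec, dotProduct_add, star_mulVec, hPh, ← dotProduct_mulVec, mulVec_mulVec,
      mulVec_mulVec]
  rw [hsplit]
  by_cases hPx : P *ᵥ x = 0
  · have hQx : (1 - P) *ᵥ x = x := by rw [sub_mulVec, hPx, one_mulVec, sub_zero]
    simpa [hQx, hPx] using PosDef.one.dotProduct_mulVec_pos hx
  · exact add_pos_of_nonneg_of_pos (hQ.dotProduct_mulVec_nonneg x) (hM.dotProduct_mulVec_pos hPx)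

theorem PosDef.one_add_mul_mul_same [Ring R] [PartialOrder R] [StarRing R]
    [StarOrderedRing R] [NoZeroDivisors R] [DecidableEq m]
    {A P : Matrix m m R} (hA : (1 + A).PosDef) (hP : IsStarProjection P) :
    (1 + P * A * P).PosDef := by
  have h := hA.one_sub_add_mul_mul_same hP
  rwa [Matrix.mul_add, Matrix.add_mul, Matrix.mul_one, hP.isIdempotentElem.eq,
    ← add_assoc, sub_add_cancel] at h

end Matrix

theorem spd_preserving_approximation_general (n l r : ℕ)
    (A : Matrix (Fin l × Fin n) (Fin l × Fin n) ℝ)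
    (L : Matrix (Fin n) (Fin n) ℝ) (hL : IsUnit L)
    (hA : (1 + A).PosDef)
    (U : Matrix (Fin n) (Fin r) ℝ) (hU : Uᵀ * U = 1) :
    (((1 : Matrix (Fin l) (Fin l) ℝ) ⊗ₖ L) *
      (1 + ((1 : Matrix (Fin l) (Fin l) ℝ) ⊗ₖ (U * Uᵀ)) * A *
        ((1 : Matrix (Fin l) (Fin l) ℝ) ⊗ₖ (U * Uᵀ))) *
      ((1 : Matrix (Fin l) (Fin l) ℝ) ⊗ₖ Lᵀ)).PosDef := by
  have hP : IsStarProjection ((1 : Matrix (Fin l) (Fin l) ℝ) ⊗ₖ (U * Uᵀ)) := by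
    rw [← conjTranspose_eq_transpose_of_trivial] at hU ⊢
    exact (isStarProjection_mul_conjTranspose hU).one_kronecker
  have hLt : (1 : Matrix (Fin l) (Fin l) ℝ) ⊗ₖ Lᵀ = star (1 ⊗ₖ L) := by
    rw [star_eq_conjTranspose, conjTranspose_kronecker, conjTranspose_one,
      conjTranspose_eq_transpose_of_trivial]
  have hIL : IsUnit ((1 : Matrix (Fin l) (Fin l) ℝ) ⊗ₖ L) := isUnit_one.kronecker hL
  rw [hLt, IsUnit.posDef_star_right_conjugate_iff hIL]
  exact hA.one_add_mul_mul_same hP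

theorem spd_preserving_approximation (n l r : ℕ)
    (T A : Matrix (Fin l × Fin n) (Fin l × Fin n) ℝ)
    (L : Matrix (Fin n) (Fin n) ℝ) (hL : IsUnit L)
    (hT : T = ((1 : Matrix (Fin l) (Fin l) ℝ) ⊗ₖ L) * (1 + A) *
      ((1 : Matrix (Fin l) (Fin l) ℝ) ⊗ₖ Lᵀ))
    (hA : (1 + A).PosDef)
    (U : Matrix (Fin n) (Fin r) ℝ) (hU : Uᵀ * U = 1) :
    (((1 : Matrix (Fin l) (Fin l) ℝ) ⊗ₖ L) *
      (1 + ((1 : Matrix (Fin l) (Fin l) ℝ) ⊗ₖ (U * Uᵀ)) * A *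
        ((1 : Matrix (Fin l) (Fin l) ℝ) ⊗ₖ (U * Uᵀ))) *
      ((1 : Matrix (Fin l) (Fin l) ℝ) ⊗ₖ Lᵀ)).PosDef :=
  spd_preserving_approximation_general n l r A L hL hA U hU
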